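/- arXiv:1312.2926 — 3 statements merged into one kernel-verified Lean document; each statement's English description precedes it below -/
import Mathlib

section
/- Let κ ≥ 1, l ≥ 0 be integers and let H : (0,∞) → ℝ be the continuous solution of H(s) = 1 for 0 < s ≤ 1 and s^{κ+l+1} H'(s) = −κ (s−1)^{κ+l} H(s−1) for s > 1. Then H is positive and decreasing, and for s > 1 one has H(s) > 1 − (κ s / (κ + l + 1)) (1 − 1/s)^{κ+l+1}. -/
open Set MeasureTheory intervalIntegral Filter Topology


private lemma Hpos_aux (κ l : ℕ) (hκ : 1 ≤ κ) (H : ℝ → ℝ)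
    (hcont : ContinuousOn H (Set.Ioi 0))
    (hH1 : ∀ s : ℝ, 0 < s → s ≤ 1 → H s = 1)
    (hderiv : ∀ s : ℝ, 1 < s →
      HasDerivAt H (-(κ : ℝ) * (s - 1) ^ (κ + l) * H (s - 1) / s ^ (κ + l + 1)) s) :
    ∀ s : ℝ, 0 < s → 0 < H s := by
  set g : ℝ → ℝ := fun t => t ^ (κ + l) * H t with hg
  have hgc : ContinuousOn g (Ioi 0) := (continuous_pow (κ + l)).continuousOn.mul hcont
  have hg_int0 : ∀ a : ℝ, 0 ≤ a → a ≤ 1 → IntervalIntegrable g volume 0 a := by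
    intro a ha ha1
    rw [intervalIntegrable_iff, Set.uIoc_of_le ha]
    refine (Continuous.integrableOn_Ioc (continuous_pow (κ + l))).congr_fun ?_ measurableSet_Ioc
    intro t ht
    simp only [g, hH1 t ht.1 (ht.2.trans ha1), mul_one]
  have hg_int : ∀ a b : ℝ, 0 ≤ a → 0 ≤ b → IntervalIntegrable g volume a b := by
    have key : ∀ a : ℝ, 0 ≤ a → IntervalIntegrable g volume 0 a := by
      intro a ha
      rcases le_or_gt a 1 with h | h
      · exact hg_int0 a ha h
      · refine (hg_int0 1 zero_le_one le_rfl).trans ?_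
        refine (hgc.mono ?_).intervalIntegrable
        rw [uIcc_of_le h.le]
        exact fun t ht => lt_of_lt_of_le one_pos ht.1
    exact fun a b ha hb => (key a ha).symm.trans (key b hb)
  set Φ : ℝ → ℝ := fun x => ∫ t in (1:ℝ)..x, g t with hΦ
  have hΦd : ∀ x : ℝ, 0 < x → HasDerivAt Φ (g x) x := by
    intro x hx
    exact intervalIntegral.integral_hasDerivAt_right (hg_int 1 x zero_le_one hx.le)
      (hgc.stronglyMeasurableAtFilter isOpen_Ioi x hx)
      (hgc.continuousAt (isOpen_Ioi.mem_nhds hx))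
  have hΦ_formula : ∀ x ∈ Icc (0:ℝ) 1, Φ x = (x ^ (κ + l + 1) - 1) / (κ + l + 1) := by
    intro x hx
    have h1 : Φ x = ∫ t in (1:ℝ)..x, t ^ (κ + l) := by
      refine intervalIntegral.integral_congr_ae (Eventually.of_forall ?_)
      intro t ht
      rw [Set.uIoc_of_ge hx.2] at ht
      simp only [g, hH1 t (lt_of_le_of_lt hx.1 ht.1) ht.2, mul_one]
    rw [h1, integral_pow]
    norm_num
  have hΦcont : ContinuousOn Φ (Ici 0) := by
    intro x hx
    rcases eq_or_lt_of_le (mem_Ici.mp hx) with h0 | h0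
    · subst h0
      have hev : (fun y : ℝ => (y ^ (κ + l + 1) - 1) / (κ + l + 1)) =ᶠ[𝓝[Ici (0:ℝ)] 0] Φ := by
        have h1 : Iio (1:ℝ) ∈ 𝓝[Ici (0:ℝ)] 0 :=
          nhdsWithin_le_nhds (Iio_mem_nhds one_pos)
        filter_upwards [h1, self_mem_nhdsWithin] with y hy1 hy0
        exact (hΦ_formula y ⟨hy0, le_of_lt hy1⟩).symm
      refine ContinuousWithinAt.congr_of_eventuallyEq ?_ hev.symm ?_
      · exact (Continuous.continuousWithinAt (by continuity))
      · rw [hΦ_formula 0 ⟨le_rfl, zero_le_one⟩]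
    · exact ((hΦd x h0).continuousAt).continuousWithinAt
  intro s hs
  by_contra hc
  push_neg at hc
  have hs1 : 1 < s := by
    by_contra h
    push_neg at h
    rw [hH1 s hs h] at hc; linarith
  set S := {x : ℝ | 1 ≤ x ∧ H x ≤ 0} with hS
  have hSne : S.Nonempty := ⟨s, hs1.le, hc⟩
  have hSbdd : BddBelow S := ⟨1, fun x hx => hx.1⟩
  have hSclosed : IsClosed S := by
    have : S = Ici 1 ∩ H ⁻¹' (Iic 0) := by
      ext x; simp [hS, Set.mem_setOf_eq]
    rw [this]
    exact ContinuousOn.preimage_isClosed_of_isClosed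
      (hcont.mono (fun x hx => mem_Ioi.mpr (lt_of_lt_of_le one_pos (mem_Ici.mp hx)))) isClosed_Ici isClosed_Iic
  set s₀ := sInf S with hs₀
  have hs₀S : s₀ ∈ S := hSclosed.csInf_mem hSne hSbdd
  have h1s₀ : 1 < s₀ := by
    rcases eq_or_lt_of_le hs₀S.1 with h | h
    · exfalso; have := hs₀S.2; rw [← h, hH1 1 one_pos le_rfl] at this; linarith
    · exact h
  have hpos_lt : ∀ x : ℝ, 0 < x → x < s₀ → 0 < H x := by
    intro x hx hxs
    rcases le_or_gt x 1 with h | h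
    · rw [hH1 x hx h]; norm_num
    · by_contra hnp
      push_neg at hnp
      exact absurd (csInf_le hSbdd ⟨h.le, hnp⟩) (not_le.mpr hxs)
  have hH0 : H s₀ = 0 := by
    refine le_antisymm hs₀S.2 ?_
    have hne : (𝓝[Set.Ioo 1 s₀] s₀).NeBot := by
      rw [← mem_closure_iff_nhdsWithin_neBot, closure_Ioo (ne_of_lt h1s₀)]
      exact ⟨h1s₀.le, le_rfl⟩
    have ht : Filter.Tendsto H (𝓝[Set.Ioo 1 s₀] s₀) (𝓝 (H s₀)) :=
      ((hcont.continuousAt (isOpen_Ioi.mem_nhds (lt_trans one_pos h1s₀))).tendsto).mono_left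
        nhdsWithin_le_nhds
    refine ge_of_tendsto ht ?_
    filter_upwards [self_mem_nhdsWithin] with x hx
    exact (hpos_lt x (lt_trans one_pos hx.1) hx.2).le
  have hHnn : ∀ x : ℝ, 0 < x → x ≤ s₀ → 0 ≤ H x := by
    intro x hx hxs
    rcases eq_or_lt_of_le hxs with h | h
    · rw [h, hH0]
    · exact (hpos_lt x hx h).le
  set G : ℝ → ℝ := fun x => x ^ (κ + l + 1) * H x - κ * (Φ x - Φ (x - 1)) with hG
  have hGd : ∀ x : ℝ, 1 < x → HasDerivAt G (((l:ℝ)+1) * x ^ (κ + l) * H x) x := by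
    intro x hx
    have hx0 : (0:ℝ) < x := lt_trans one_pos hx
    have h1 : HasDerivAt (fun u : ℝ => u ^ (κ + l + 1) * H u)
        ((↑(κ + l + 1) : ℝ) * x ^ (κ + l) * H x
          + x ^ (κ + l + 1) * (-(κ : ℝ) * (x - 1) ^ (κ + l) * H (x - 1) / x ^ (κ + l + 1))) x := by
      have := (hasDerivAt_pow (κ + l + 1) x).mul (hderiv x hx)
      exact this.congr_deriv (by simp)
    have h2 : HasDerivAt Φ (g x) x := hΦd x hx0
    have h3 : HasDerivAt (fun u : ℝ => Φ (u - 1)) (g (x - 1)) x := by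
      have := (hΦd (x-1) (by linarith)).comp x ((hasDerivAt_id x).sub_const 1)
      exact this.congr_deriv (by simp)
    have h4 := h1.sub (((h2.sub h3)).const_mul (κ : ℝ))
    refine h4.congr_deriv ?_
    have hxm : x ^ (κ + l + 1) ≠ 0 := pow_ne_zero _ (ne_of_gt hx0)
    simp only [g]
    field_simp
    push_cast
    ring
  have hGmono : MonotoneOn G (Icc 1 s₀) := by
    apply monotoneOn_of_deriv_nonneg (convex_Icc 1 s₀)
    · apply ContinuousOn.sub
      · exact (continuous_pow (κ + l + 1)).continuousOn.mul
          (hcont.mono (fun x hx => lt_of_lt_of_le one_pos hx.1))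
      · refine continuousOn_const.mul (ContinuousOn.sub ?_ ?_)
        · exact hΦcont.mono (fun x hx => le_trans zero_le_one hx.1)
        · refine hΦcont.comp ((continuous_id.sub continuous_const).continuousOn) ?_
          intro x hx
          show x - 1 ∈ Ici (0:ℝ)
          have : (1:ℝ) ≤ x := hx.1
          simp only [Set.mem_Ici]
          linarith
    · rw [interior_Icc]
      intro x hx
      exact (hGd x hx.1).differentiableAt.differentiableWithinAt
    · rw [interior_Icc]
      intro x hx
      rw [(hGd x hx.1).deriv]
      have hHx : 0 < H x := hpos_lt x (lt_trans one_pos hx.1) hx.2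
      have hx0 : (0:ℝ) < x := lt_trans one_pos hx.1
      positivity
  have hkey : G 1 ≤ G s₀ :=
    hGmono ⟨le_rfl, h1s₀.le⟩ ⟨h1s₀.le, le_rfl⟩ h1s₀.le
  have hΦ1 : Φ 1 = 0 := intervalIntegral.integral_same
  have hΦ0 : Φ 0 = -(1 / ((κ:ℝ) + l + 1)) := by
    rw [hΦ_formula 0 ⟨le_rfl, zero_le_one⟩, zero_pow (by omega)]
    ring
  have hG1 : G 1 = 1 - (κ : ℝ) / ((κ:ℝ) + l + 1) := by
    have h11 : (1:ℝ) - 1 = 0 := by norm_num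
    simp only [hG, h11, hΦ1, hΦ0, hH1 1 one_pos le_rfl, one_pow, mul_one]
    ring
  have hGs₀ : G s₀ ≤ 0 := by
    have hint : Φ s₀ - Φ (s₀ - 1) = ∫ t in (s₀-1)..s₀, g t :=
      intervalIntegral.integral_interval_sub_left
        (hg_int 1 s₀ zero_le_one (by linarith))
        (hg_int 1 (s₀-1) zero_le_one (by linarith))
    have hnn : 0 ≤ ∫ t in (s₀-1)..s₀, g t := by
      refine intervalIntegral.integral_nonneg (by linarith) ?_
      intro u hu
      have hu0 : 0 < u := by have := hu.1; linarith
      exact mul_nonneg (pow_nonneg hu0.le _) (hHnn u hu0 hu.2)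
    have h0 : G s₀ = -((κ:ℝ) * ∫ t in (s₀-1)..s₀, g t) := by
      simp only [hG, hH0, mul_zero, zero_sub, hint]
    rw [h0]
    have : 0 ≤ (κ : ℝ) * ∫ t in (s₀-1)..s₀, g t :=
      mul_nonneg (Nat.cast_nonneg κ) hnn
    linarith
  have hfrac : (κ : ℝ) / ((κ:ℝ) + l + 1) < 1 := by
    rw [div_lt_one (by positivity)]
    have : (0:ℝ) ≤ l := Nat.cast_nonneg l
    linarith
  have hfinal : (1:ℝ) - (κ : ℝ) / ((κ:ℝ) + l + 1) ≤ 0 := by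
    rw [hG1] at hkey
    exact hkey.trans hGs₀
  linarith

/-- The normalized solution H of the differential-difference equation is
positive and decreasing on (0,∞), and satisfies
H(s) > 1 − (κs/(κ+l+1))(1−1/s)^{κ+l+1} for s > 1. -/
theorem H_positive_decreasing_lower_bound (κ l : ℕ) (hκ : 1 ≤ κ) (H : ℝ → ℝ)
    (hcont : ContinuousOn H (Set.Ioi 0))
    (hH1 : ∀ s : ℝ, 0 < s → s ≤ 1 → H s = 1)
    (hderiv : ∀ s : ℝ, 1 < s →
      HasDerivAt H (-(κ : ℝ) * (s - 1) ^ (κ + l) * H (s - 1) / s ^ (κ + l + 1)) s) :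
    (∀ s : ℝ, 0 < s → 0 < H s) ∧
    (∀ a b : ℝ, 0 < a → a ≤ b → H b ≤ H a) ∧
    (∀ s : ℝ, 1 < s →
      H s > 1 - ((κ : ℝ) * s / ((κ : ℝ) + l + 1)) * (1 - 1/s) ^ (κ + l + 1)) := by
  have hpos := Hpos_aux κ l hκ H hcont hH1 hderiv
  -- antitone
  have hA : AntitoneOn H (Ici 1) := by
    apply antitoneOn_of_deriv_nonpos (convex_Ici 1)
    · exact hcont.mono (fun x hx => mem_Ioi.mpr (lt_of_lt_of_le one_pos (mem_Ici.mp hx)))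
    · rw [interior_Ici]
      intro x hx
      exact (hderiv x hx).differentiableAt.differentiableWithinAt
    · rw [interior_Ici]
      intro x hx
      rw [(hderiv x hx).deriv]
      have h1 : 0 < H (x - 1) := hpos _ (by simp only [Set.mem_Ioi] at hx; linarith)
      have hx1 : (1:ℝ) < x := hx
      have h2 : (0:ℝ) ≤ (x - 1) ^ (κ + l) := pow_nonneg (by linarith) _
      apply div_nonpos_of_nonpos_of_nonneg
      · have : (0:ℝ) ≤ (κ:ℝ) * (x - 1) ^ (κ + l) * H (x - 1) :=
          mul_nonneg (mul_nonneg (Nat.cast_nonneg κ) h2) h1.le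
        nlinarith
      · positivity
  have hanti : ∀ a b : ℝ, 0 < a → a ≤ b → H b ≤ H a := by
    intro a b ha hab
    rcases le_or_gt b 1 with hb | hb
    · rw [hH1 a ha (hab.trans hb), hH1 b (lt_of_lt_of_le ha hab) hb]
    · rcases le_or_gt a 1 with ha1 | ha1
      · rw [hH1 a ha ha1]
        calc H b ≤ H 1 := hA (mem_Ici.mpr le_rfl) (mem_Ici.mpr hb.le) hb.le
        _ = 1 := hH1 1 one_pos le_rfl
      · exact hA (mem_Ici.mpr ha1.le) (mem_Ici.mpr (ha1.le.trans hab)) hab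
  have hle1 : ∀ u : ℝ, 0 < u → H u ≤ 1 := by
    intro u hu
    rcases le_or_gt u 1 with h | h
    · rw [hH1 u hu h]
    · calc H u ≤ H 1 := hA (mem_Ici.mpr le_rfl) (mem_Ici.mpr h.le) h.le
      _ = 1 := hH1 1 one_pos le_rfl
  refine ⟨hpos, hanti, ?_⟩
  intro s hs
  have hs0 : (0:ℝ) < s := lt_trans one_pos hs
  -- the integrand ψ and its continuity on [1, s]
  set ψ : ℝ → ℝ := fun t => (t - 1) ^ (κ + l) * H (t - 1) / t ^ (κ + l + 1) with hψ
  have hψcont : ContinuousOn ψ (Icc 1 s) := by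
    intro t ht
    rcases eq_or_lt_of_le ht.1 with h1 | h1
    · -- t = 1
      subst h1
      have hev : (fun u : ℝ => (u - 1) ^ (κ + l) / u ^ (κ + l + 1))
          =ᶠ[𝓝[Icc (1:ℝ) s] 1] ψ := by
        have h2 : Iio (2:ℝ) ∈ 𝓝[Icc (1:ℝ) s] 1 :=
          nhdsWithin_le_nhds (Iio_mem_nhds one_lt_two)
        filter_upwards [h2, self_mem_nhdsWithin] with u hu2 hu1
        have hu2' : u < 2 := hu2
        rcases eq_or_lt_of_le hu1.1 with h | h
        · simp only [ψ, ← h]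
          norm_num [zero_pow (show κ + l ≠ 0 by omega)]
        · simp only [ψ, hH1 (u - 1) (by linarith) (by linarith), mul_one]
      refine ContinuousWithinAt.congr_of_eventuallyEq ?_ hev.symm ?_
      · refine ContinuousWithinAt.div ?_ ?_ (by norm_num)
        · exact (Continuous.continuousWithinAt (by continuity))
        · exact (Continuous.continuousWithinAt (by continuity))
      · simp only [ψ]
        norm_num [zero_pow (show κ + l ≠ 0 by omega)]
    · -- t > 1
      have hc1 : ContinuousAt (fun u : ℝ => H (u - 1)) t := by
        have hs1 : ContinuousAt (fun u : ℝ => u - 1) t := by fun_prop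
        exact (hcont.continuousAt (isOpen_Ioi.mem_nhds (by simp only [Set.mem_Ioi]; linarith))).comp hs1
      have : ContinuousAt ψ t := by
        refine ContinuousAt.div ?_ (by fun_prop) (by positivity)
        exact ContinuousAt.mul (by fun_prop) hc1
      exact this.continuousWithinAt
  have hψint : IntervalIntegrable ψ volume 1 s := by
    refine ContinuousOn.intervalIntegrable ?_
    rw [uIcc_of_le hs.le]; exact hψcont
  -- FTC: H s = 1 - κ * ∫ ψ
  have hfun : (fun t : ℝ => -(κ : ℝ) * (t - 1) ^ (κ + l) * H (t - 1) / t ^ (κ + l + 1))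
      = fun t => -(κ : ℝ) * ψ t := by
    funext t; simp only [ψ]; ring
  have hFTC : ∫ t in (1:ℝ)..s, -(κ : ℝ) * (t - 1) ^ (κ + l) * H (t - 1) / t ^ (κ + l + 1)
      = H s - H 1 := by
    refine intervalIntegral.integral_eq_sub_of_hasDerivAt_of_le hs.le
      (hcont.mono (fun x hx => lt_of_lt_of_le one_pos hx.1))
      (fun x hx => hderiv x hx.1) ?_
    rw [hfun]
    exact (hψint.const_mul _)
  have hHs : H s = 1 - (κ : ℝ) * ∫ t in (1:ℝ)..s, ψ t := by
    rw [hfun] at hFTC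
    rw [intervalIntegral.integral_const_mul] at hFTC
    rw [hH1 1 one_pos le_rfl] at hFTC
    linarith
  -- comparison integrands
  set ψ₂ : ℝ → ℝ := fun t => (t - 1) ^ (κ + l) / t ^ (κ + l + 1) with hψ₂
  set ψ₃ : ℝ → ℝ := fun t => s * ((t - 1) ^ (κ + l) / t ^ (κ + l + 2)) with hψ₃
  have hψ₂cont : ContinuousOn ψ₂ (Icc 1 s) := by
    intro t ht
    have ht0 : (0:ℝ) < t := lt_of_lt_of_le one_pos ht.1
    exact (ContinuousAt.div (by fun_prop) (by fun_prop) (by positivity)).continuousWithinAt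
  have hψ₃cont : ContinuousOn ψ₃ (Icc 1 s) := by
    intro t ht
    have ht0 : (0:ℝ) < t := lt_of_lt_of_le one_pos ht.1
    exact (ContinuousAt.mul continuousAt_const
      (ContinuousAt.div (by fun_prop) (by fun_prop) (by positivity))).continuousWithinAt
  have hI12 : (∫ t in (1:ℝ)..s, ψ t) ≤ ∫ t in (1:ℝ)..s, ψ₂ t := by
    refine intervalIntegral.integral_mono_on hs.le hψint
      (hψ₂cont.intervalIntegrable_of_Icc hs.le) ?_
    intro t ht
    rcases eq_or_lt_of_le ht.1 with h | h
    · simp only [ψ, ψ₂, ← h]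
      norm_num [zero_pow (show κ + l ≠ 0 by omega)]
    · have ht0 : (0:ℝ) < t := lt_trans one_pos h
      have hHt : H (t - 1) ≤ 1 := hle1 (t - 1) (by linarith)
      have hHt0 : 0 ≤ H (t - 1) := (hpos (t - 1) (by linarith)).le
      simp only [ψ, ψ₂]
      have hnum : (t - 1) ^ (κ + l) * H (t - 1) ≤ (t - 1) ^ (κ + l) :=
        mul_le_of_le_one_right (pow_nonneg (by linarith) _) hHt
      exact (div_le_div_iff_of_pos_right (by positivity)).mpr hnum
  have hI23 : (∫ t in (1:ℝ)..s, ψ₂ t) < ∫ t in (1:ℝ)..s, ψ₃ t := by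
    refine intervalIntegral.integral_lt_integral_of_continuousOn_of_le_of_exists_lt hs
      hψ₂cont hψ₃cont ?_ ?_
    · intro t ht
      have ht1 : (1:ℝ) < t := ht.1
      have ht0 : (0:ℝ) < t := lt_trans one_pos ht1
      have hts : t ≤ s := ht.2
      have hsub : ψ₃ t - ψ₂ t = (t - 1) ^ (κ + l) * (s - t) / t ^ (κ + l + 2) := by
        simp only [ψ₂, ψ₃]
        have ht0' : t ≠ 0 := ne_of_gt ht0
        field_simp
        ring
      have hge : 0 ≤ (t - 1) ^ (κ + l) * (s - t) / t ^ (κ + l + 2) :=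
        div_nonneg (mul_nonneg (pow_nonneg (by linarith) _) (by linarith)) (by positivity)
      linarith
    · refine ⟨(1 + s)/2, ⟨by linarith, by linarith⟩, ?_⟩
      set c : ℝ := (1 + s)/2 with hc
      have hc1 : (1:ℝ) < c := by simp only [hc]; linarith
      have hcs : c < s := by simp only [hc]; linarith
      have hc0 : (0:ℝ) < c := lt_trans one_pos hc1
      have hsub : ψ₃ c - ψ₂ c = (c - 1) ^ (κ + l) * (s - c) / c ^ (κ + l + 2) := by
        simp only [ψ₂, ψ₃]
        have hc0' : c ≠ 0 := ne_of_gt hc0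
        field_simp
        ring
      have hgt : 0 < (c - 1) ^ (κ + l) * (s - c) / c ^ (κ + l + 2) :=
        div_pos (mul_pos (pow_pos (by linarith) _) (by linarith)) (by positivity)
      linarith
  have hI3 : (∫ t in (1:ℝ)..s, ψ₃ t)
      = s * ((1 - 1/s) ^ (κ + l + 1) / ((κ:ℝ) + l + 1)) := by
    have hd : ∀ t ∈ uIcc (1:ℝ) s,
        HasDerivAt (fun u : ℝ => (1 - u⁻¹) ^ (κ + l + 1) / ((κ:ℝ) + l + 1))
          ((t - 1) ^ (κ + l) / t ^ (κ + l + 2)) t := by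
      intro t ht
      rw [uIcc_of_le hs.le] at ht
      have ht0 : (0:ℝ) < t := lt_of_lt_of_le one_pos ht.1
      have h1 : HasDerivAt (fun u : ℝ => 1 - u⁻¹) ((t^2)⁻¹) t := by
        have := (hasDerivAt_inv (ne_of_gt ht0)).const_sub 1
        simpa using this
      have h2 := (h1.pow (κ + l + 1)).div_const ((κ:ℝ) + l + 1)
      refine h2.congr_deriv ?_
      have hne : ((κ:ℝ) + l + 1) ≠ 0 := by positivity
      have h3 : (1 - t⁻¹) = (t - 1)/t := by field_simp
      rw [h3]
      rw [div_pow]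
      push_cast
      field_simp
      ring
    have hint : IntervalIntegrable (fun t : ℝ => (t - 1) ^ (κ + l) / t ^ (κ + l + 2))
        volume 1 s := by
      refine ContinuousOn.intervalIntegrable ?_
      rw [uIcc_of_le hs.le]
      intro t ht
      have ht0 : (0:ℝ) < t := lt_of_lt_of_le one_pos ht.1
      exact (ContinuousAt.div (by fun_prop) (by fun_prop) (by positivity)).continuousWithinAt
    have := intervalIntegral.integral_eq_sub_of_hasDerivAt hd hint
    have hs' : (1:ℝ) - 1⁻¹ = 0 := by norm_num
    rw [hs', zero_pow (by omega), zero_div, sub_zero] at this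
    have heq : (∫ t in (1:ℝ)..s, ψ₃ t)
        = s * ∫ t in (1:ℝ)..s, (t - 1) ^ (κ + l) / t ^ (κ + l + 2) := by
      simp only [ψ₃]
      rw [intervalIntegral.integral_const_mul]
    rw [heq, this, inv_eq_one_div]
  -- final assembly
  have hκ0 : (0:ℝ) < κ := by exact_mod_cast hκ
  have hstep : (κ:ℝ) * ∫ t in (1:ℝ)..s, ψ t < (κ:ℝ) * (s * ((1 - 1/s) ^ (κ + l + 1) / ((κ:ℝ) + l + 1))) := by
    rw [← hI3]
    exact mul_lt_mul_of_pos_left (lt_of_le_of_lt hI12 hI23) hκ0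
  rw [gt_iff_lt, hHs]
  have hring : (κ:ℝ) * (s * ((1 - 1/s) ^ (κ + l + 1) / ((κ:ℝ) + l + 1)))
      = ((κ : ℝ) * s / ((κ : ℝ) + l + 1)) * (1 - 1/s) ^ (κ + l + 1) := by
    ring
  linarith [hstep, hring ▸ hstep]
end

section
/- Let h be a multiplicative function supported on squarefree integers coprime to Δ with h(d) ≥ 0 and h(p) = k/(p−k), let l ≥ 1 be an integer, D > 1, and define Y(D) = ∑_{m < √D, (m,Δ)=1} h(m) (log(√D/m))^l and ρ_d = μ(d) d/τ_k(d) · Y(D)^{-1} ∑_{b < √D, d | b} h(b)(log(√D/b))^l as in the GPY construction. Then for every squarefree d coprime to Δ one has |ρ_d| ≤ 1. -/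
open Classical in
/-- The van Lint–Richert bound |ρ_d| ≤ 1 for the GPY sieve constituents. -/
theorem gpy_rho_le_one (k l Δ : ℕ) (hk : 1 ≤ k) (hl : 1 ≤ l) (D : ℝ) (hD : 1 < D)
    (h : ℕ → ℝ) (h1 : h 1 = 1)
    (hmult : ∀ m n : ℕ, Nat.Coprime m n → h (m * n) = h m * h n)
    (hnonneg : ∀ m, 0 ≤ h m)
    (hsupp : ∀ m : ℕ, ¬ (Squarefree m ∧ Nat.Coprime m Δ) → h m = 0)
    (hp : ∀ p : ℕ, Nat.Prime p → ¬ p ∣ Δ → h p = (k : ℝ) / ((p : ℝ) - k))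
    (hΔ : ∀ p : ℕ, Nat.Prime p → p ≤ k → p ∣ Δ)
    (Y : ℝ)
    (hY : Y = ∑ m ∈ (Finset.range (⌊Real.sqrt D⌋₊ + 1)).filter
        (fun m : ℕ => 1 ≤ m ∧ (m : ℝ) < Real.sqrt D),
      h m * (Real.log (Real.sqrt D / m)) ^ l)
    (ρ : ℕ → ℝ)
    (hρ : ∀ d : ℕ, ρ d = (ArithmeticFunction.moebius d : ℝ) * (d : ℝ)
        / ((k : ℝ) ^ d.primeFactors.card) / Y *
      ∑ b ∈ (Finset.range (⌊Real.sqrt D⌋₊ + 1)).filter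
          (fun b : ℕ => 1 ≤ b ∧ (b : ℝ) < Real.sqrt D ∧ d ∣ b),
        h b * (Real.log (Real.sqrt D / b)) ^ l)
    (d : ℕ) (hd : Squarefree d) (hdΔ : Nat.Coprime d Δ) :
    |ρ d| ≤ 1 := by
  classical
  set Q : ℝ := Real.sqrt D with hQdef
  have hDpos : (0:ℝ) < D := lt_trans one_pos hD
  have hQ1 : 1 < Q := by
    nlinarith [Real.sq_sqrt hDpos.le, Real.sqrt_nonneg D]
  have hQ0 : 0 < Q := lt_trans one_pos hQ1
  set N : ℕ := ⌊Q⌋₊ + 1 with hNdef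
  set F : Finset ℕ := Finset.range N with hFdef
  have hd0 : d ≠ 0 := hd.ne_zero
  have hd1 : 1 ≤ d := Nat.one_le_iff_ne_zero.mpr hd0
  have hk0 : (0:ℝ) < (k:ℝ) := by exact_mod_cast hk
  -- membership in range via the real bound
  have hmemF : ∀ m : ℕ, (m:ℝ) < Q → m ∈ F := by
    intro m hm
    simp only [hFdef, Finset.mem_range, hNdef, Nat.lt_succ_iff, Nat.le_floor_iff hQ0.le]
    exact hm.le
  -- log nonnegativity
  have wnn : ∀ m : ℕ, (m:ℝ) ≤ Q → 0 ≤ Real.log (Q / m) := by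
    intro m hm
    rcases Nat.eq_zero_or_pos m with h0 | h0
    · simp [h0]
    · have hm0 : (0:ℝ) < m := by exact_mod_cast h0
      apply Real.log_nonneg
      rw [le_div_iff₀ hm0, one_mul]
      exact hm
  have wpnn : ∀ m : ℕ, (m:ℝ) ≤ Q → 0 ≤ Real.log (Q / m) ^ l :=
    fun m hm => pow_nonneg (wnn m hm) l
  -- the predicate and inner sums
  set P : ℕ → ℕ → Prop := fun a n => (1 ≤ n ∧ ((a*n : ℕ) : ℝ) < Q) ∧ n.Coprime d
    with hPdef
  set T : ℕ → ℝ := fun a =>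
      ∑ n ∈ F.filter (P a), h n * Real.log (Q / ((a*n : ℕ) : ℝ)) ^ l with hTdef
  have Tnn : ∀ a, 0 ≤ T a := by
    intro a
    apply Finset.sum_nonneg
    intro n hn
    rw [Finset.mem_filter] at hn
    exact mul_nonneg (hnonneg n) (wpnn _ hn.2.1.2.le)
  -- Step B : S = h d * T d
  set S : ℝ := ∑ b ∈ F.filter (fun b : ℕ => 1 ≤ b ∧ (b : ℝ) < Q ∧ d ∣ b),
      h b * (Real.log (Q / b)) ^ l with hSdef
  have hS : S = h d * T d := by
    have e1 : S = ∑ n ∈ F.filter (fun n => 1 ≤ n ∧ ((d*n : ℕ) : ℝ) < Q),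
        h (d*n) * Real.log (Q / ((d*n : ℕ) : ℝ)) ^ l := by
      apply Finset.sum_nbij' (i := fun b => b / d) (j := fun n => d * n)
      · intro b hb
        rw [Finset.mem_filter] at hb ⊢
        obtain ⟨hbF, hb1, hbQ, hdvd⟩ := hb
        have hcancel : d * (b / d) = b := Nat.mul_div_cancel' hdvd
        refine ⟨?_, ?_, ?_⟩
        · exact Finset.mem_range.mpr
            (lt_of_le_of_lt (Nat.div_le_self b d) (Finset.mem_range.mp hbF))
        · have : d ≤ b := Nat.le_of_dvd hb1 hdvd
          exact Nat.one_le_div_iff (by omega) |>.mpr this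
        · rw [hcancel]; exact hbQ
      · intro n hn
        rw [Finset.mem_filter] at hn ⊢
        obtain ⟨hnF, hn1, hnQ⟩ := hn
        refine ⟨hmemF _ hnQ, Nat.mul_le_mul hd1 hn1, hnQ, dvd_mul_right d n⟩
      · intro b hb
        rw [Finset.mem_filter] at hb
        exact Nat.mul_div_cancel' hb.2.2.2
      · intro n hn
        exact Nat.mul_div_cancel_left n (by omega)
      · intro b hb
        rw [Finset.mem_filter] at hb
        rw [Nat.mul_div_cancel' hb.2.2.2]
    rw [e1, ← Finset.sum_filter_add_sum_filter_not
        (F.filter (fun n => 1 ≤ n ∧ ((d*n : ℕ) : ℝ) < Q)) (fun n => n.Coprime d),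
      Finset.filter_filter, Finset.filter_filter]
    have hz : ∑ n ∈ F.filter (fun n => (1 ≤ n ∧ ((d*n : ℕ) : ℝ) < Q) ∧ ¬ n.Coprime d),
        h (d*n) * Real.log (Q / ((d*n : ℕ) : ℝ)) ^ l = 0 := by
      apply Finset.sum_eq_zero
      intro n hn
      rw [Finset.mem_filter] at hn
      have hz0 : h (d*n) = 0 := by
        apply hsupp
        rintro ⟨hsq, -⟩
        exact hn.2.2 ((Nat.squarefree_mul_iff.mp hsq).1.symm)
      rw [hz0, zero_mul]
    rw [hz, add_zero, hTdef]
    simp only [Finset.mul_sum]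
    apply Finset.sum_congr rfl
    intro n hn
    rw [Finset.mem_filter] at hn
    rw [hmult d n hn.2.2.symm]
    ring
  -- Step C : key identity
  set c : ℕ := d.primeFactors.card with hcdef
  have keyid : (k:ℝ) ^ c * ∑ a ∈ d.divisors, h a = (d:ℝ) * h d := by
    have h0 : h 0 = 0 := hsupp 0 (fun hc => not_squarefree_zero hc.1)
    set f : ArithmeticFunction ℝ := ⟨h, h0⟩ with hfdef
    have hfa : ∀ n, f n = h n := fun n => rfl
    have hf : f.IsMultiplicative := ⟨h1, fun {m n} hc => hmult m n hc⟩
    set g := (↑(ArithmeticFunction.zeta) : ArithmeticFunction ℝ) * f with hgdef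
    have hg : g.IsMultiplicative := ArithmeticFunction.isMultiplicative_zeta.natCast.mul hf
    have hgp : ∀ p : ℕ, p.Prime → g p = 1 + h p := by
      intro p hp'
      rw [hgdef, ArithmeticFunction.coe_zeta_mul_apply, hp'.divisors,
        Finset.sum_insert (by simp [(Nat.Prime.one_lt hp').ne]), Finset.sum_singleton,
        hfa, hfa, h1]
    have hprod := Nat.prod_primeFactors_of_squarefree hd
    have hhd := hf.map_prod_of_subset_primeFactors d d.primeFactors subset_rfl
    rw [hprod] at hhd
    have hgd := hg.map_prod_of_subset_primeFactors d d.primeFactors subset_rfl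
    rw [hprod] at hgd
    have hsum : ∑ a ∈ d.divisors, h a = ∏ p ∈ d.primeFactors, (1 + h p) := by
      have : g d = ∑ a ∈ d.divisors, h a := by
        rw [hgdef, ArithmeticFunction.coe_zeta_mul_apply]
        exact Finset.sum_congr rfl fun a _ => hfa a
      rw [← this, hgd]
      exact Finset.prod_congr rfl
        (fun p hpm => hgp p (Nat.prime_of_mem_primeFactors hpm))
    have hdcast : (d:ℝ) = ∏ p ∈ d.primeFactors, (p:ℝ) := by
      rw [← Nat.cast_prod, hprod]
    have hhd' : h d = ∏ p ∈ d.primeFactors, h p := by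
      rw [← hfa, hhd]
      exact Finset.prod_congr rfl (fun p _ => hfa p)
    rw [hsum, hdcast, hhd', hcdef, ← Finset.prod_const,
      ← Finset.prod_mul_distrib, ← Finset.prod_mul_distrib]
    apply Finset.prod_congr rfl
    intro p hpm
    have pp := Nat.prime_of_mem_primeFactors hpm
    have pd : p ∣ d := Nat.dvd_of_mem_primeFactors hpm
    have pΔ : ¬ p ∣ Δ := by
      intro hc
      have : p ∣ Nat.gcd d Δ := Nat.dvd_gcd pd hc
      rw [hdΔ] at this
      exact (Nat.Prime.one_lt pp).ne' (Nat.dvd_one.mp this)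
    have pk : k < p := by
      by_contra hc
      exact pΔ (hΔ p pp (by omega))
    have hpk : (0:ℝ) < (p:ℝ) - (k:ℝ) := by
      have : (k:ℝ) < (p:ℝ) := by exact_mod_cast pk
      linarith
    rw [hp p pp pΔ]
    field_simp
    ring
  -- Step D : T d ≤ T a for a ∣ d
  have TdTa : ∀ a ∈ d.divisors, T d ≤ T a := by
    intro a ha
    rw [Nat.mem_divisors] at ha
    have had : a ∣ d := ha.1
    have ha1 : 1 ≤ a := Nat.pos_of_dvd_of_pos had hd1
    have hale : a ≤ d := Nat.le_of_dvd hd1 had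
    have hanle : ∀ n : ℕ, ((a*n : ℕ) : ℝ) ≤ ((d*n : ℕ) : ℝ) := by
      intro n; exact_mod_cast Nat.mul_le_mul_right n hale
    have step1 : T d ≤ ∑ n ∈ F.filter (P d), h n * Real.log (Q / ((a*n : ℕ) : ℝ)) ^ l := by
      rw [hTdef]
      apply Finset.sum_le_sum
      intro n hn
      rw [Finset.mem_filter] at hn
      obtain ⟨-, ⟨hn1, hnQ⟩, -⟩ := hn
      apply mul_le_mul_of_nonneg_left _ (hnonneg n)
      have han1 : (1:ℝ) ≤ ((a*n : ℕ) : ℝ) := by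
        exact_mod_cast Nat.mul_le_mul ha1 hn1
      have hlog : Real.log (Q / ((d*n : ℕ) : ℝ)) ≤ Real.log (Q / ((a*n : ℕ) : ℝ)) := by
        have h2 : Q / ((d*n : ℕ) : ℝ) ≤ Q / ((a*n : ℕ) : ℝ) := by
          apply div_le_div_of_nonneg_left hQ0.le (by linarith) (hanle n)
        have h3 : (0:ℝ) < Q / ((d*n : ℕ) : ℝ) := by
          apply div_pos hQ0; linarith [hanle n]
        exact Real.log_le_log h3 h2
      exact pow_le_pow_left₀ (wnn _ hnQ.le) hlog l
    have step2 : ∑ n ∈ F.filter (P d), h n * Real.log (Q / ((a*n : ℕ) : ℝ)) ^ l ≤ T a := by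
      rw [hTdef]
      apply Finset.sum_le_sum_of_subset_of_nonneg
      · intro n hn
        rw [Finset.mem_filter] at hn ⊢
        obtain ⟨hnF, ⟨hn1, hnQ⟩, hcop⟩ := hn
        exact ⟨hnF, ⟨hn1, lt_of_le_of_lt (hanle n) hnQ⟩, hcop⟩
      · intro n hn _
        rw [Finset.mem_filter] at hn
        exact mul_nonneg (hnonneg n) (wpnn _ hn.2.1.2.le)
    exact le_trans step1 step2
  -- Step D' : Y lower bound
  have Ylb : (∑ a ∈ d.divisors, h a) * T d ≤ Y := by
    set Sig := d.divisors.sigma (fun a => F.filter (P a)) with hSigdef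
    have step1 : (∑ a ∈ d.divisors, h a) * T d ≤ ∑ a ∈ d.divisors, h a * T a := by
      rw [Finset.sum_mul]
      exact Finset.sum_le_sum (fun a ha =>
        mul_le_mul_of_nonneg_left (TdTa a ha) (hnonneg a))
    have step2 : ∑ a ∈ d.divisors, h a * T a
        = ∑ p ∈ Sig, h (p.1 * p.2) * Real.log (Q / ((p.1 * p.2 : ℕ) : ℝ)) ^ l := by
      rw [hSigdef, Finset.sum_sigma]
      apply Finset.sum_congr rfl
      intro a ha
      rw [Nat.mem_divisors] at ha
      rw [hTdef, Finset.mul_sum]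
      apply Finset.sum_congr rfl
      intro n hn
      rw [Finset.mem_filter] at hn
      have hcop : Nat.Coprime a n := ((hn.2.2).coprime_dvd_right ha.1).symm
      rw [hmult a n hcop]
      ring
    have hinj : ∀ x ∈ Sig, ∀ y ∈ Sig,
        (fun p : Σ _ : ℕ, ℕ => p.1 * p.2) x = (fun p : Σ _ : ℕ, ℕ => p.1 * p.2) y → x = y := by
      rintro ⟨a, n⟩ hx ⟨a', n'⟩ hy heq
      simp only at heq
      rw [hSigdef, Finset.mem_sigma, Nat.mem_divisors, Finset.mem_filter] at hx hy
      have ha1 : 0 < a := Nat.pos_of_dvd_of_pos hx.1.1 hd1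
      have hcop1 : Nat.Coprime a n' := ((hy.2.2.2).coprime_dvd_right hx.1.1).symm
      have hcop2 : Nat.Coprime a' n := ((hx.2.2.2).coprime_dvd_right hy.1.1).symm
      have haa' : a = a' := by
        apply Nat.dvd_antisymm
        · exact (Nat.Coprime.dvd_of_dvd_mul_right hcop1) ⟨n, heq.symm⟩
        · exact (Nat.Coprime.dvd_of_dvd_mul_right hcop2) ⟨n', heq⟩
      subst haa'
      have hnn' : n = n' := Nat.eq_of_mul_eq_mul_left ha1 heq
      subst hnn'
      rfl
    have step3 : ∑ p ∈ Sig, h (p.1 * p.2) * Real.log (Q / ((p.1 * p.2 : ℕ) : ℝ)) ^ l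
        = ∑ m ∈ Sig.image (fun p : Σ _ : ℕ, ℕ => p.1 * p.2),
            h m * Real.log (Q / (m : ℝ)) ^ l :=
      (Finset.sum_image (f := fun m : ℕ => h m * Real.log (Q / (m : ℝ)) ^ l) hinj).symm
    have hsub2 : Sig.image (fun p : Σ _ : ℕ, ℕ => p.1 * p.2)
        ⊆ F.filter (fun m : ℕ => 1 ≤ m ∧ (m : ℝ) < Q) := by
      intro m hm
      rw [Finset.mem_image] at hm
      obtain ⟨⟨a, n⟩, hpm, rfl⟩ := hm
      rw [hSigdef, Finset.mem_sigma, Nat.mem_divisors, Finset.mem_filter] at hpm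
      obtain ⟨⟨had, -⟩, -, ⟨hn1, hnQ⟩, -⟩ := hpm
      have ha1 : 1 ≤ a := Nat.pos_of_dvd_of_pos had hd1
      rw [Finset.mem_filter]
      exact ⟨hmemF _ hnQ, Nat.mul_le_mul ha1 hn1, hnQ⟩
    have step4 : ∑ m ∈ Sig.image (fun p : Σ _ : ℕ, ℕ => p.1 * p.2),
        h m * Real.log (Q / (m : ℝ)) ^ l ≤ Y := by
      rw [hY]
      apply Finset.sum_le_sum_of_subset_of_nonneg hsub2
      intro m hm _
      rw [Finset.mem_filter] at hm
      exact mul_nonneg (hnonneg m) (wpnn _ hm.2.2.le)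
    calc (∑ a ∈ d.divisors, h a) * T d ≤ ∑ a ∈ d.divisors, h a * T a := step1
      _ = _ := step2
      _ = _ := step3
      _ ≤ Y := step4
  -- Step E : Y positive
  have Ypos : 0 < Y := by
    rw [hY]
    have h1F : (1:ℕ) ∈ F.filter (fun m : ℕ => 1 ≤ m ∧ (m : ℝ) < Q) := by
      rw [Finset.mem_filter]
      exact ⟨hmemF 1 (by exact_mod_cast hQ1), le_refl 1, by exact_mod_cast hQ1⟩
    have hterm : 0 < h 1 * Real.log (Q / ((1:ℕ) : ℝ)) ^ l := by
      rw [h1, one_mul, Nat.cast_one, div_one]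
      exact pow_pos (Real.log_pos hQ1) l
    refine lt_of_lt_of_le hterm
      (Finset.single_le_sum (f := fun m : ℕ => h m * Real.log (Q / (m : ℝ)) ^ l) ?_ h1F)
    intro m hm
    rw [Finset.mem_filter] at hm
    exact mul_nonneg (hnonneg m) (wpnn _ hm.2.2.le)
  -- Final assembly
  have Snn : 0 ≤ S := hS ▸ mul_nonneg (hnonneg d) (Tnn d)
  have hkc : (0:ℝ) < (k:ℝ) ^ c := pow_pos hk0 c
  have hμ : |((ArithmeticFunction.moebius d : ℤ) : ℝ)| = 1 := by
    rw [ArithmeticFunction.moebius_apply_of_squarefree hd]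
    push_cast
    rw [abs_pow, abs_neg, abs_one, one_pow]
  have habs : |ρ d| = (d:ℝ) / (k:ℝ) ^ c / Y * S := by
    rw [hρ d]
    rw [abs_mul, abs_div, abs_div, abs_mul, hμ, one_mul]
    rw [abs_of_nonneg (Nat.cast_nonneg d), abs_of_nonneg hkc.le, abs_of_nonneg Ypos.le,
      abs_of_nonneg Snn]
  rw [habs]
  have key2 : (d:ℝ) / (k:ℝ) ^ c * S = (∑ a ∈ d.divisors, h a) * T d := by
    have h3 : (d:ℝ) * h d / (k:ℝ) ^ c = ∑ a ∈ d.divisors, h a := by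
      rw [← keyid, mul_div_cancel_left₀ _ hkc.ne']
    rw [hS, show (d:ℝ) / (k:ℝ) ^ c * (h d * T d) = ((d:ℝ) * h d / (k:ℝ) ^ c) * T d by ring, h3]
  calc (d:ℝ) / (k:ℝ) ^ c / Y * S = ((d:ℝ) / (k:ℝ) ^ c * S) / Y := by ring
    _ = ((∑ a ∈ d.divisors, h a) * T d) / Y := by rw [key2]
    _ ≤ 1 := by rw [div_le_one Ypos]; exact Ylb
end

section
/- Let ψ : ℝ → ℝ be supported on |u| ≤ 2 with ψ(u) = 1 for |u| ≤ 1, and let K ≥ 1, M ≥ 1. Then for every integer n with 1 ≤ n ≤ 2M^K, Λ(n) = −∑_{1 ≤ J ≤ K} (−1)^J binom(K,J) ∑_{l₁⋯l_J m₁⋯m_J = n} μ(m₁)⋯μ(m_J) ψ(m₁/M)⋯ψ(m_J/M) log l₁, where the inner sum runs over all 2J-tuples of positive integers with product n. -/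
open ArithmeticFunction Finset
open scoped ArithmeticFunction.zeta

namespace SHB

noncomputable def af (ψ : ℝ → ℝ) (M : ℝ) : ArithmeticFunction ℝ :=
  ⟨fun m => (moebius m : ℝ) * ψ (m / M), by simp⟩

@[simp] lemma af_apply (ψ : ℝ → ℝ) (M : ℝ) (m : ℕ) :
    af ψ M m = (moebius m : ℝ) * ψ (m / M) := rfl

open Classical in
noncomputable def PP (J n : ℕ) : Finset (Fin J → ℕ × ℕ) :=
  (Fintype.piFinset (fun _ : Fin J => n.divisors ×ˢ n.divisors)).filter
    (fun f => ∏ j, ((f j).1 * (f j).2) = n)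

lemma mem_PP {J n : ℕ} {f : Fin J → ℕ × ℕ} :
    f ∈ PP J n ↔ (∀ j, f j ∈ n.divisors ×ˢ n.divisors) ∧ ∏ j, ((f j).1 * (f j).2) = n := by
  classical
  simp [PP, Fintype.mem_piFinset]

lemma mem_PP_of_prod {J n : ℕ} (hn : n ≠ 0) {f : Fin J → ℕ × ℕ}
    (h : ∏ j, ((f j).1 * (f j).2) = n) : f ∈ PP J n := by
  rw [mem_PP]
  refine ⟨fun j => Finset.mem_product.mpr ⟨Nat.mem_divisors.mpr ⟨?_, hn⟩,
    Nat.mem_divisors.mpr ⟨?_, hn⟩⟩, h⟩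
  · exact dvd_trans (dvd_mul_right _ _) (h ▸ Finset.dvd_prod_of_mem _ (mem_univ j))
  · exact dvd_trans (dvd_mul_left _ _) (h ▸ Finset.dvd_prod_of_mem _ (mem_univ j))

lemma prod_eq_of_mem_PP {J n : ℕ} {f : Fin J → ℕ × ℕ} (h : f ∈ PP J n) :
    ∏ j, ((f j).1 * (f j).2) = n := (mem_PP.mp h).2

lemma peel (J n : ℕ) (hn : n ≠ 0) (F : (Fin (J + 1) → ℕ × ℕ) → ℝ) :
    ∑ f ∈ PP (J + 1) n, F f
      = ∑ p ∈ n.divisorsAntidiagonal, ∑ q ∈ p.2.divisorsAntidiagonal,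
          ∑ g ∈ PP J p.1, F (Fin.snoc g q) := by
  have hstep : ∀ p ∈ n.divisorsAntidiagonal,
      (∑ q ∈ p.2.divisorsAntidiagonal, ∑ g ∈ PP J p.1, F (Fin.snoc g q))
        = ∑ y ∈ p.2.divisorsAntidiagonal ×ˢ PP J p.1, F (Fin.snoc y.2 y.1) :=
    fun p _ => by rw [Finset.sum_product]
  rw [Finset.sum_congr rfl hstep, Finset.sum_sigma']
  refine Finset.sum_nbij'
    (fun f => ⟨(∏ j : Fin J, ((f j.castSucc).1 * (f j.castSucc).2),
      (f (Fin.last J)).1 * (f (Fin.last J)).2), (f (Fin.last J), Fin.init f)⟩)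
    (fun x => Fin.snoc x.2.2 x.2.1) ?_ ?_ ?_ ?_ ?_
  · intro f hf
    have hprod := prod_eq_of_mem_PP hf
    rw [Fin.prod_univ_castSucc] at hprod
    rw [Finset.mem_sigma]
    constructor
    · exact Nat.mem_divisorsAntidiagonal.mpr ⟨hprod, hn⟩
    · rw [Finset.mem_product]
      constructor
      · refine Nat.mem_divisorsAntidiagonal.mpr ⟨rfl, ?_⟩
        intro h0
        dsimp only at h0
        rw [h0, mul_zero] at hprod
        exact hn hprod.symm
      · refine mem_PP_of_prod ?_ rfl
        intro h0
        dsimp only at h0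
        rw [h0, zero_mul] at hprod
        exact hn hprod.symm
  · rintro ⟨⟨r, s⟩, q, g⟩ hx
    rw [Finset.mem_sigma, Finset.mem_product] at hx
    obtain ⟨hp, hq, hg⟩ := hx
    obtain ⟨hrs, -⟩ := Nat.mem_divisorsAntidiagonal.mp hp
    obtain ⟨hqs, -⟩ := Nat.mem_divisorsAntidiagonal.mp hq
    refine mem_PP_of_prod hn ?_
    rw [Fin.prod_univ_castSucc]
    simp only [Fin.snoc_castSucc, Fin.snoc_last]
    rw [prod_eq_of_mem_PP hg, hqs, hrs]
  · intro f _
    exact Fin.snoc_init_self f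
  · rintro ⟨⟨r, s⟩, q, g⟩ hx
    rw [Finset.mem_sigma, Finset.mem_product] at hx
    obtain ⟨hp, hq, hg⟩ := hx
    obtain ⟨hqs, -⟩ := Nat.mem_divisorsAntidiagonal.mp hq
    have h1 : ∏ j : Fin J, (((Fin.snoc g q : Fin (J+1) → ℕ × ℕ) j.castSucc).1 *
        ((Fin.snoc g q : Fin (J+1) → ℕ × ℕ) j.castSucc).2) = r := by
      simp only [Fin.snoc_castSucc]
      exact prod_eq_of_mem_PP hg
    simp only [Fin.snoc_last, Fin.init_snoc, h1, hqs]
  · intro f _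
    rw [Fin.snoc_init_self]

noncomputable def T (ψ : ℝ → ℝ) (M : ℝ) (J n : ℕ) : ℝ :=
  ∑ f ∈ PP (J + 1) n, (∏ j, af ψ M ((f j).2)) * Real.log ((f 0).1)

lemma T_eq (ψ : ℝ → ℝ) (M : ℝ) :
    ∀ J n, n ≠ 0 →
      T ψ M J n
        = ((ArithmeticFunction.log * af ψ M)
            * ((ζ : ArithmeticFunction ℝ) * af ψ M) ^ J) n := by
  intro J
  induction J with
  | zero =>
    intro n hn
    rw [pow_zero, mul_one, ArithmeticFunction.mul_apply]
    refine Finset.sum_nbij' (fun f => f 0) (fun p => fun _ => p) ?_ ?_ ?_ ?_ ?_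
    · intro f hf
      have := prod_eq_of_mem_PP hf
      rw [Fin.prod_univ_one] at this
      exact Nat.mem_divisorsAntidiagonal.mpr ⟨this, hn⟩
    · intro p hp
      refine mem_PP_of_prod hn ?_
      rw [Fin.prod_univ_one]
      exact (Nat.mem_divisorsAntidiagonal.mp hp).1
    · intro f _
      funext j
      rw [Fin.fin_one_eq_zero j]
    · intro p _
      rfl
    · intro f _
      rw [Fin.prod_univ_one, ArithmeticFunction.log_apply, mul_comm]
  | succ J ih =>
    intro n hn
    have hMain := peel (J + 1) n hn
      (fun f => (∏ j, af ψ M ((f j).2)) * Real.log ((f 0).1))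
    rw [T, hMain]
    have hterm : ∀ p ∈ n.divisorsAntidiagonal,
        (∑ q ∈ p.2.divisorsAntidiagonal, ∑ g ∈ PP (J + 1) p.1,
          (∏ j, af ψ M (((Fin.snoc g q : Fin (J + 2) → ℕ × ℕ) j).2))
            * Real.log (((Fin.snoc g q : Fin (J + 2) → ℕ × ℕ) 0).1))
          = ((ArithmeticFunction.log * af ψ M)
              * ((ζ : ArithmeticFunction ℝ) * af ψ M) ^ J) p.1
            * ((ζ : ArithmeticFunction ℝ) * af ψ M) p.2 := by
      intro p hp
      obtain ⟨hpeq, -⟩ := Nat.mem_divisorsAntidiagonal.mp hp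
      have hp1 : p.1 ≠ 0 := by
        intro h0; rw [h0, zero_mul] at hpeq; exact hn hpeq.symm
      have hsnoc0 : ∀ (g : Fin (J + 1) → ℕ × ℕ) (q : ℕ × ℕ),
          (Fin.snoc g q : Fin (J + 2) → ℕ × ℕ) 0 = g 0 := by
        intro g q
        rw [← Fin.castSucc_zero, Fin.snoc_castSucc]
      have hprodsnoc : ∀ (g : Fin (J + 1) → ℕ × ℕ) (q : ℕ × ℕ),
          (∏ j, af ψ M (((Fin.snoc g q : Fin (J + 2) → ℕ × ℕ) j).2))
            = (∏ j, af ψ M ((g j).2)) * af ψ M q.2 := by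
        intro g q
        rw [Fin.prod_univ_castSucc]
        simp only [Fin.snoc_castSucc, Fin.snoc_last]
      calc (∑ q ∈ p.2.divisorsAntidiagonal, ∑ g ∈ PP (J + 1) p.1,
          (∏ j, af ψ M (((Fin.snoc g q : Fin (J + 2) → ℕ × ℕ) j).2))
            * Real.log (((Fin.snoc g q : Fin (J + 2) → ℕ × ℕ) 0).1))
          = ∑ q ∈ p.2.divisorsAntidiagonal, (∑ g ∈ PP (J + 1) p.1,
              (∏ j, af ψ M ((g j).2)) * Real.log ((g 0).1)) * af ψ M q.2 := by
            refine Finset.sum_congr rfl fun q _ => ?_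
            rw [Finset.sum_mul]
            refine Finset.sum_congr rfl fun g _ => ?_
            rw [hprodsnoc, hsnoc0]
            ring
        _ = T ψ M J p.1 * ∑ q ∈ p.2.divisorsAntidiagonal, af ψ M q.2 := by
            rw [← Finset.mul_sum]
            rfl
        _ = ((ArithmeticFunction.log * af ψ M)
              * ((ζ : ArithmeticFunction ℝ) * af ψ M) ^ J) p.1
            * ((ζ : ArithmeticFunction ℝ) * af ψ M) p.2 := by
            rw [ih p.1 hp1]
            congr 1
            rw [ArithmeticFunction.coe_zeta_mul_apply]
            exact Nat.sum_divisorsAntidiagonal' (fun _ y => af ψ M y)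
    rw [Finset.sum_congr rfl hterm, pow_succ, ← mul_assoc, ArithmeticFunction.mul_apply]

lemma natCast_apply' (c x : ℕ) :
    ((c : ArithmeticFunction ℝ)) x = if x = 1 then (c : ℝ) else 0 := rfl

lemma neg_apply' (f : ArithmeticFunction ℝ) (n : ℕ) : (-f) n = -(f n) := rfl

lemma sum_apply' {ι : Type*} (s : Finset ι) (f : ι → ArithmeticFunction ℝ) (n : ℕ) :
    (∑ i ∈ s, f i) n = ∑ i ∈ s, f i n := by
  classical
  induction s using Finset.induction_on with
  | empty => simp
  | insert _ _ h ih => rw [Finset.sum_insert h, Finset.sum_insert h, ArithmeticFunction.add_apply, ih]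

lemma mul_natCast_apply (g : ArithmeticFunction ℝ) (c n : ℕ) (hn : n ≠ 0) :
    (g * (c : ArithmeticFunction ℝ)) n = g n * c := by
  rw [ArithmeticFunction.mul_apply, Finset.sum_eq_single (n, 1)]
  · rw [natCast_apply', if_pos rfl]
  · rintro ⟨u, v⟩ hx hne
    obtain ⟨huv, -⟩ := Nat.mem_divisorsAntidiagonal.mp hx
    rcases eq_or_ne v 1 with rfl | hv
    · exfalso
      have hu : u = n := by simpa using huv
      exact hne (by rw [hu])
    · rw [natCast_apply', if_neg hv, mul_zero]
  · intro h
    exact absurd (Nat.mem_divisorsAntidiagonal.mpr ⟨mul_one n, hn⟩) h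

lemma eval_coeff (G : ArithmeticFunction ℝ) (J c n : ℕ) (hn : n ≠ 0) :
    (((-1 : ArithmeticFunction ℝ) ^ J) * G * (c : ArithmeticFunction ℝ)) n
      = (-1 : ℝ) ^ J * G n * c := by
  rcases Nat.even_or_odd J with hJ | hJ
  · rw [hJ.neg_one_pow (α := ArithmeticFunction ℝ), one_mul, mul_natCast_apply _ _ _ hn,
      hJ.neg_one_pow (α := ℝ), one_mul]
  · rw [hJ.neg_one_pow (α := ArithmeticFunction ℝ), hJ.neg_one_pow (α := ℝ), neg_one_mul,
      neg_mul, neg_apply', mul_natCast_apply _ _ _ hn, neg_one_mul, neg_mul]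

lemma key_expand (g x : ArithmeticFunction ℝ) (K n : ℕ) (hn : n ≠ 0) :
    (g * (1 - x) ^ K) n
      = ∑ J ∈ Finset.range (K + 1), (-1 : ℝ) ^ J * (K.choose J : ℝ) * ((g * x ^ J) n) := by
  have h1 : (1 - x) ^ K = ∑ J ∈ Finset.range (K + 1),
      (-x) ^ J * (1 : ArithmeticFunction ℝ) ^ (K - J) * ((K.choose J : ℕ) : ArithmeticFunction ℝ) := by
    rw [sub_eq_neg_add, add_pow]
  rw [h1, Finset.mul_sum, sum_apply']
  refine Finset.sum_congr rfl fun J _ => ?_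
  have h2 : g * ((-x) ^ J * (1 : ArithmeticFunction ℝ) ^ (K - J)
        * ((K.choose J : ℕ) : ArithmeticFunction ℝ))
      = ((-1 : ArithmeticFunction ℝ) ^ J) * (g * x ^ J)
        * ((K.choose J : ℕ) : ArithmeticFunction ℝ) := by
    ring
  rw [h2, eval_coeff _ _ _ _ hn]
  ring

lemma e_apply_eq_zero (ψ : ℝ → ℝ) (M : ℝ) (hψ1 : ∀ u : ℝ, |u| ≤ 1 → ψ u = 1) (hM : 1 ≤ M)
    (m : ℕ) (hm : (m : ℝ) ≤ M) :
    (1 - (ζ : ArithmeticFunction ℝ) * af ψ M) m = 0 := by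
  rcases eq_or_ne m 0 with rfl | hm0
  · exact ArithmeticFunction.map_zero
  have hM0 : (0 : ℝ) < M := lt_of_lt_of_le one_pos hM
  have hone : ∀ i ∈ m.divisors, af ψ M i = ((moebius i : ℤ) : ℝ) := by
    intro i hi
    obtain ⟨hdvd, -⟩ := Nat.mem_divisors.mp hi
    have hile : (i : ℝ) ≤ M :=
      le_trans (Nat.cast_le.mpr (Nat.le_of_dvd (Nat.pos_of_ne_zero hm0) hdvd)) hm
    have hψ : ψ ((i : ℝ) / M) = 1 := by
      apply hψ1
      rw [abs_of_nonneg (by positivity), div_le_one hM0]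
      exact hile
    rw [af_apply, hψ, mul_one]
  have hmoeb : (∑ i ∈ m.divisors, ((moebius i : ℤ) : ℝ)) = (1 : ArithmeticFunction ℝ) m := by
    have h := congrArg (fun f : ArithmeticFunction ℝ => f m)
      (ArithmeticFunction.coe_moebius_mul_coe_zeta (R := ℝ))
    simpa only [ArithmeticFunction.coe_mul_zeta_apply, ArithmeticFunction.intCoe_apply] using h
  rw [sub_eq_add_neg, ArithmeticFunction.add_apply, neg_apply',
    ArithmeticFunction.coe_zeta_mul_apply, Finset.sum_congr rfl hone, hmoeb]
  ring

lemma pow_support (ψ : ℝ → ℝ) (M : ℝ) (hψ1 : ∀ u : ℝ, |u| ≤ 1 → ψ u = 1) (hM : 1 ≤ M) :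
    ∀ k, 1 ≤ k → ∀ m : ℕ,
      ((1 - (ζ : ArithmeticFunction ℝ) * af ψ M) ^ k) m ≠ 0 → M ^ k < (m : ℝ) := by
  intro k hk
  induction k, hk using Nat.le_induction with
  | base =>
    intro m hm
    rw [pow_one] at hm
    rw [pow_one]
    by_contra h
    push_neg at h
    exact hm (e_apply_eq_zero ψ M hψ1 hM m h)
  | succ k hk ih =>
    intro m hm
    rw [pow_succ, ArithmeticFunction.mul_apply] at hm
    obtain ⟨p, hp, hne⟩ := Finset.exists_ne_zero_of_sum_ne_zero hm
    obtain ⟨hpe, -⟩ := Nat.mem_divisorsAntidiagonal.mp hp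
    obtain ⟨h1, h2⟩ := mul_ne_zero_iff.mp hne
    have hlt1 := ih p.1 h1
    have hlt2 : M < (p.2 : ℝ) := by
      by_contra h
      push_neg at h
      exact h2 (e_apply_eq_zero ψ M hψ1 hM p.2 h)
    have hcast : (m : ℝ) = (p.1 : ℝ) * (p.2 : ℝ) := by
      rw [← hpe]; push_cast; ring
    rw [pow_succ, hcast]
    exact mul_lt_mul'' hlt1 hlt2 (by positivity) (by linarith)

lemma key_zero (ψ : ℝ → ℝ) (M : ℝ) (hψ1 : ∀ u : ℝ, |u| ≤ 1 → ψ u = 1) (hM : 1 ≤ M)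
    (K : ℕ) (hK : 1 ≤ K) (n : ℕ) (hn2 : (n : ℝ) ≤ 2 * M ^ K) :
    (vonMangoldt * (1 - (ζ : ArithmeticFunction ℝ) * af ψ M) ^ K) n = 0 := by
  rw [ArithmeticFunction.mul_apply]
  apply Finset.sum_eq_zero
  intro p hp
  obtain ⟨hpe, -⟩ := Nat.mem_divisorsAntidiagonal.mp hp
  by_contra hne
  obtain ⟨h1, h2⟩ := mul_ne_zero_iff.mp hne
  have hpp : 2 ≤ p.1 := (vonMangoldt_ne_zero_iff.mp h1).two_le
  have hgt := pow_support ψ M hψ1 hM K hK p.2 h2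
  have hcast : (n : ℝ) = (p.1 : ℝ) * (p.2 : ℝ) := by rw [← hpe]; push_cast; ring
  have hp2pos : (0 : ℝ) < (p.2 : ℝ) := lt_trans (by positivity) hgt
  have h2p1 : (2 : ℝ) ≤ (p.1 : ℝ) := by exact_mod_cast hpp
  have : 2 * M ^ K < (n : ℝ) := by
    calc 2 * M ^ K < 2 * (p.2 : ℝ) := by
          exact mul_lt_mul_of_pos_left hgt two_pos
      _ ≤ (p.1 : ℝ) * (p.2 : ℝ) := mul_le_mul_of_nonneg_right h2p1 (le_of_lt hp2pos)
      _ = (n : ℝ) := hcast.symm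
  linarith

end SHB

open Classical in
/-- Smoothed Heath-Brown identity for the von Mangoldt function. -/
theorem smoothed_heath_brown (ψ : ℝ → ℝ)
    (hψ0 : ∀ u : ℝ, 2 < |u| → ψ u = 0)
    (hψ1 : ∀ u : ℝ, |u| ≤ 1 → ψ u = 1)
    (K : ℕ) (hK : 1 ≤ K) (M : ℝ) (hM : 1 ≤ M)
    (n : ℕ) (hn1 : 1 ≤ n) (hn2 : (n : ℝ) ≤ 2 * M ^ K) :
    (ArithmeticFunction.vonMangoldt n : ℝ)
      = - ∑ J ∈ Finset.Icc 1 K, (-1 : ℝ) ^ J * (K.choose J : ℝ) *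
          ∑ f ∈ (Fintype.piFinset (fun _ : Fin J => n.divisors ×ˢ n.divisors)).filter
              (fun f => ∏ j, ((f j).1 * (f j).2) = n),
            (∏ j, ((ArithmeticFunction.moebius (f j).2 : ℝ) * ψ ((f j).2 / M))) *
              (if hJ : 0 < J then Real.log ((f ⟨0, hJ⟩).1 : ℝ) else 0) := by
  have hn : n ≠ 0 := by omega
  have h0 := SHB.key_zero ψ M hψ1 hM K hK n hn2
  rw [SHB.key_expand _ _ K n hn, Finset.sum_range_succ'] at h0
  have hterm0 : (-1 : ℝ) ^ (0 : ℕ) * (K.choose 0 : ℝ)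
      * ((ArithmeticFunction.vonMangoldt
          * ((ζ : ArithmeticFunction ℝ) * SHB.af ψ M) ^ (0 : ℕ)) n)
      = ArithmeticFunction.vonMangoldt n := by
    simp
  rw [hterm0] at h0
  have hre : ∑ i ∈ Finset.range K, (-1 : ℝ) ^ (i + 1) * (K.choose (i + 1) : ℝ)
        * ((ArithmeticFunction.vonMangoldt
            * ((ζ : ArithmeticFunction ℝ) * SHB.af ψ M) ^ (i + 1)) n)
      = ∑ J ∈ Finset.Icc 1 K, (-1 : ℝ) ^ J * (K.choose J : ℝ)
        * ((ArithmeticFunction.vonMangoldt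
            * ((ζ : ArithmeticFunction ℝ) * SHB.af ψ M) ^ J) n) := by
    rw [← Finset.Ico_add_one_right_eq_Icc, Finset.sum_Ico_eq_sum_range, Nat.add_sub_cancel]
    exact Finset.sum_congr rfl fun i _ => by rw [add_comm 1 i]
  rw [hre] at h0
  have hgoal : (ArithmeticFunction.vonMangoldt n : ℝ)
      = - ∑ J ∈ Finset.Icc 1 K, (-1 : ℝ) ^ J * (K.choose J : ℝ)
        * ((ArithmeticFunction.vonMangoldt
            * ((ζ : ArithmeticFunction ℝ) * SHB.af ψ M) ^ J) n) := by linarith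
  rw [hgoal]
  congr 1
  refine Finset.sum_congr rfl fun J hJ => ?_
  obtain ⟨J', rfl⟩ : ∃ J', J = J' + 1 :=
    ⟨J - 1, by have := (Finset.mem_Icc.mp hJ).1; omega⟩
  congr 1
  have hx1 : ArithmeticFunction.vonMangoldt
        * ((ζ : ArithmeticFunction ℝ) * SHB.af ψ M) ^ (J' + 1)
      = (ArithmeticFunction.log * SHB.af ψ M)
        * ((ζ : ArithmeticFunction ℝ) * SHB.af ψ M) ^ J' := by
    rw [pow_succ', ← mul_assoc, ← mul_assoc, ArithmeticFunction.vonMangoldt_mul_zeta]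
  rw [hx1, ← SHB.T_eq ψ M J' n hn, SHB.T]
  refine Finset.sum_congr rfl fun f hf => ?_
  rw [dif_pos (Nat.succ_pos J')]
  simp only [SHB.af_apply, Fin.mk_zero]
end
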